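/- arXiv:1909.05375 — 2 statements merged into one kernel-verified Lean document; each statement's English description precedes it below -/
import Mathlib

section
/- For positive integers l and k with l ≥ 2, let ω be uniform on {-1,1}^{[k]×[l]}, and for j ∈ [k] let Y_j be the indicator of the event that tribe j is pivotal (i.e. exactly one i ∈ [l] has ω(j,i) = −1). Then for every j ∈ [k], ℙ[Y_j = 1 and Tribes(l,k)(ω) = 1] ≤ ℙ[Y_j = 1] · ℙ[Tribes(l,k)(ω) = 1]. -/
/-! If tribe `j` is pivotal it is not all `+1`, so on that event `Tribes = 1` means that some
other tribe is all `+1`. That event depends only on the coordinates outside tribe `j`, so it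
is independent of `Y_j`, and it is contained in `{Tribes = 1}`. -/

open Finset Filter

attribute [local instance] Classical.propDecidable

/-- The discrete hypercube indexed by `ι`: `true` encodes `+1`, `false` encodes `-1`
(so the pointwise `Bool` order, with `false < true`, is the coordinatewise partial
order on `{-1,1}^ι` with `-1 < 1`). -/
abbrev Cube (ι : Type) := ι → Bool

/-- `ω` with its `i`-th coordinate flipped. -/
def flipAt {ι : Type} [DecidableEq ι] (ω : Cube ι) (i : ι) : Cube ι :=
  fun j => if j = i then !ω j else ω j

/-- The pivotal set `𝒫(f, ω)`: coordinates whose flip changes the value of `f`. -/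
noncomputable def pivSet {ι : Type} [DecidableEq ι] [Fintype ι] {β : Type}
    (f : Cube ι → β) (ω : Cube ι) : Finset ι :=
  Finset.univ.filter fun i => f (flipAt ω i) ≠ f ω

/-- Probability of the event `p` under the uniform measure on the hypercube. -/
noncomputable def unifProb {ι : Type} [DecidableEq ι] [Fintype ι] (p : Cube ι → Prop) : ℝ :=
  ((Finset.univ.filter p).card : ℝ) / (Fintype.card (Cube ι) : ℝ)

/-- Expectation of `X` under the uniform measure on the hypercube. -/
noncomputable def unifExp {ι : Type} [DecidableEq ι] [Fintype ι] (X : Cube ι → ℝ) : ℝ :=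
  (∑ ω : Cube ι, X ω) / (Fintype.card (Cube ι) : ℝ)

/-- Conditional expectation of `X` given the event `A`, under the uniform measure. -/
noncomputable def condExpect {ι : Type} [DecidableEq ι] [Fintype ι]
    (X : Cube ι → ℝ) (A : Cube ι → Prop) : ℝ :=
  (∑ ω ∈ Finset.univ.filter A, X ω) / ((Finset.univ.filter A).card : ℝ)

/-- `Tribes(l,k)` as a `{0,1}`-valued integer function on `{-1,1}^{[k]×[l]}`:
value `1` iff some tribe `t ∈ [k]` has all of its `l` bits equal to `+1` (`true`). -/
noncomputable def tribes (k l : ℕ) (ω : Cube (Fin k × Fin l)) : ℤ :=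
  if ∃ t : Fin k, ∀ i : Fin l, ω (t, i) = true then 1 else 0

/-- Coordinatewise negation `-ω`. -/
def negCube {ι : Type} (ω : Cube ι) : Cube ι := fun x => !ω x

/-- The number of pivotal tribes: tribes having exactly one `-1` (`false`) bit. -/
noncomputable def pivTribeCount (k l : ℕ) (ω : Cube (Fin k × Fin l)) : ℕ :=
  (Finset.univ.filter fun t : Fin k => ∃! i : Fin l, ω (t, i) = false).card

/-- Single-coordinate weight of the `ε`-noise joint distribution `ν_ε`. -/
noncomputable def noiseWeight (ε : ℝ) (b b' : Bool) : ℝ :=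
  if b = b' then (1 - ε / 2) / 2 else ε / 4

/-- Probability of the event `E` under the `ε`-noise joint distribution `ν_ε`
(the product over coordinates of the single-coordinate weights). -/
noncomputable def noiseProb {ι : Type} [DecidableEq ι] [Fintype ι] (ε : ℝ)
    (E : Cube ι → Cube ι → Prop) : ℝ :=
  ∑ ω : Cube ι, ∑ ω' : Cube ι,
    if E ω ω' then ∏ i : ι, noiseWeight ε (ω i) (ω' i) else 0

/-- `f` is transitive: it is invariant under some subgroup of permutations of the
coordinate set acting transitively, where `(σ · ω) x = ω (σ⁻¹ x)`. -/
def TransitiveInvariant {ι : Type} {β : Type} (f : Cube ι → β) : Prop :=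
  ∃ G : Subgroup (Equiv.Perm ι),
    (∀ x y : ι, ∃ σ ∈ G, σ x = y) ∧
    ∀ σ ∈ G, ∀ ω : Cube ι, f (fun x => ω (σ⁻¹ x)) = f ω

lemma unifProb_eq_natCard {ι : Type} [DecidableEq ι] [Fintype ι] (p : Cube ι → Prop) :
    unifProb p = Nat.card {ω // p ω} / Nat.card (Cube ι) := by
  simp [unifProb, Nat.card_eq_fintype_card, Fintype.card_subtype]

lemma natCard_subtype_and_of_equiv_prod {α δ₁ δ₂ : Type} (e : α ≃ δ₁ × δ₂)
    (P : δ₁ → Prop) (Q : δ₂ → Prop) :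
    Nat.card {x // P (e x).1 ∧ Q (e x).2} = Nat.card {a // P a} * Nat.card {b // Q b} := by
  rw [← Nat.card_prod]
  exact Nat.card_congr ((e.subtypeEquiv fun _ => Iff.rfl).trans Equiv.subtypeProdEquivProd)

lemma unifProb_and_eq_mul_of_equiv_prod {ι δ₁ δ₂ : Type} [DecidableEq ι] [Fintype ι]
    (e : Cube ι ≃ δ₁ × δ₂) (P : δ₁ → Prop) (Q : δ₂ → Prop) :
    unifProb (fun ω => P (e ω).1 ∧ Q (e ω).2) =
      unifProb (fun ω => P (e ω).1) * unifProb (fun ω => Q (e ω).2) := by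
  have hcard : Nat.card (Cube ι) = Nat.card δ₁ * Nat.card δ₂ := by
    rw [Nat.card_congr e, Nat.card_prod]
  have hP : Nat.card {ω // P (e ω).1} = Nat.card {a // P a} * Nat.card δ₂ := by
    simpa using natCard_subtype_and_of_equiv_prod e P fun _ => True
  have hQ : Nat.card {ω // Q (e ω).2} = Nat.card δ₁ * Nat.card {b // Q b} := by
    simpa using natCard_subtype_and_of_equiv_prod e (fun _ => True) Q
  have hpos : 0 < Nat.card δ₁ * Nat.card δ₂ := hcard ▸ Nat.card_pos
  have hδ₁ : (Nat.card δ₁ : ℝ) ≠ 0 := by exact_mod_cast (Nat.pos_of_mul_pos_right hpos).ne'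
  have hδ₂ : (Nat.card δ₂ : ℝ) ≠ 0 := by exact_mod_cast (Nat.pos_of_mul_pos_left hpos).ne'
  simp only [unifProb_eq_natCard, natCard_subtype_and_of_equiv_prod, hP, hQ, hcard]
  push_cast
  field_simp

lemma unifProb_nonneg {ι : Type} [DecidableEq ι] [Fintype ι] (p : Cube ι → Prop) :
    0 ≤ unifProb p := by
  unfold unifProb; positivity

lemma unifProb_mono {ι : Type} [DecidableEq ι] [Fintype ι] {p q : Cube ι → Prop}
    (h : ∀ ω, p ω → q ω) : unifProb p ≤ unifProb q := by
  unfold unifProb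
  gcongr with ω
  exact h ω

lemma tribes_eq_one_iff {k l : ℕ} (ω : Cube (Fin k × Fin l)) :
    tribes k l ω = 1 ↔ ∃ t, ∀ i, ω (t, i) = true := by
  unfold tribes
  split_ifs with h <;> simp [h]

lemma tribes_eq_one_iff_of_exists_false {k l : ℕ} {ω : Cube (Fin k × Fin l)} {j : Fin k}
    (hj : ∃ i, ω (j, i) = false) :
    tribes k l ω = 1 ↔ ∃ t, ∃ _ : t ≠ j, ∀ i, ω (t, i) = true := by
  rw [tribes_eq_one_iff]
  refine ⟨fun ⟨t, ht⟩ => ⟨t, ?_, ht⟩, fun ⟨t, _, ht⟩ => ⟨t, ht⟩⟩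
  rintro rfl
  obtain ⟨i, hi⟩ := hj
  simp [ht i] at hi

theorem stmt7_general (l k : ℕ) (j : Fin k) :
    unifProb (fun ω : Cube (Fin k × Fin l) =>
        (∃! i : Fin l, ω (j, i) = false) ∧ tribes k l ω = 1) ≤
      unifProb (fun ω : Cube (Fin k × Fin l) => ∃! i : Fin l, ω (j, i) = false) *
        unifProb (fun ω : Cube (Fin k × Fin l) => tribes k l ω = 1) := by
  let e := Equiv.piEquivPiSubtypeProd (fun x : Fin k × Fin l => x.1 = j) fun _ => Bool
  let pivotal : Cube {x : Fin k × Fin l // x.1 = j} → Prop :=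
    fun a => ∃! i, a ⟨(j, i), rfl⟩ = false
  let otherTribeWins : Cube {x : Fin k × Fin l // x.1 ≠ j} → Prop :=
    fun b => ∃ t, ∃ h : t ≠ j, ∀ i, b ⟨(t, i), h⟩ = true
  calc _ = unifProb fun ω => pivotal (e ω).1 ∧ otherTribeWins (e ω).2 := by
        congr 1; ext ω
        exact and_congr_right fun hj => tribes_eq_one_iff_of_exists_false hj.exists
    _ = _ * unifProb fun ω => otherTribeWins (e ω).2 :=
        unifProb_and_eq_mul_of_equiv_prod e pivotal otherTribeWins
    _ ≤ _ := by
        refine mul_le_mul_of_nonneg_left (unifProb_mono fun ω ⟨t, _, ht⟩ => ?_) (unifProb_nonneg _)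
        exact (tribes_eq_one_iff ω).2 ⟨t, ht⟩

/-- For `l ≥ 2` and `k ≥ 1`, for every tribe `j`, the event that tribe `j`
is pivotal and the event `{Tribes(l,k)(ω) = 1}` are negatively correlated:
`ℙ[Y_j = 1 ∧ Tribes = 1] ≤ ℙ[Y_j = 1]·ℙ[Tribes = 1]`. -/
theorem stmt7 (l k : ℕ) (hl : 2 ≤ l) (hk : 0 < k) (j : Fin k) :
    unifProb (fun ω : Cube (Fin k × Fin l) =>
        (∃! i : Fin l, ω (j, i) = false) ∧ tribes k l ω = 1) ≤
      unifProb (fun ω : Cube (Fin k × Fin l) => ∃! i : Fin l, ω (j, i) = false) *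
        unifProb (fun ω : Cube (Fin k × Fin l) => tribes k l ω = 1) :=
  stmt7_general l k j
end

section
/- For positive integers l and k with l ≥ 2, let ω be uniform on {-1,1}^{[k]×[l]} and let X(ω) be the number of pivotal tribes. Then the events {Tribes(l,k)(ω) = 1} and {Tribes(l,k)(ω) = 0} both have positive probability, and 𝔼[X | Tribes(l,k)(ω) = 1] ≤ 𝔼[X] ≤ 𝔼[X | Tribes(l,k)(ω) = 0], where 𝔼[X] = k·l·2^{−l}. -/
/-!
Identify `{-1,1}^{[k]×[l]}` with `k`-tuples of tribe configurations. Then `{Tribes = 0}` is the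
product event "every tribe contains a `-1`", of size `(2^l - 1)^k`, and double counting pairs
(pivotal tribe, `ω`) gives `∑_ω X = k·l·2^{l(k-1)}` and `∑_{Tribes = 0} X = k·l·(2^l - 1)^{k-1}`.
Hence `𝔼[X] = kl/2^l ≤ kl/(2^l - 1) = 𝔼[X | Tribes = 0]`, and since `𝔼[X]` is a convex
combination of the two conditional expectations, `𝔼[X | Tribes = 1] ≤ 𝔼[X]`.
-/

open Finset Filter

attribute [local instance] Classical.propDecidable

section PiCounting

variable {ι T : Type*} [Fintype ι] [DecidableEq ι] [Fintype T]

theorem card_filter_forall_apply (r : T → Prop) [DecidablePred r] :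
    #{f : ι → T | ∀ s, r (f s)} = #{v | r v} ^ Fintype.card ι := by
  have hpi : univ.filter (fun f : ι → T => ∀ s, r (f s))
      = Fintype.piFinset fun _ => univ.filter r := by
    ext f; simp
  rw [hpi, Fintype.card_piFinset, prod_const, card_univ]

theorem card_filter_forall_apply_and_apply (r q : T → Prop) [DecidablePred r] [DecidablePred q]
    (t : ι) :
    #{f : ι → T | (∀ s, r (f s)) ∧ q (f t)}
      = #{v | r v ∧ q v} * #{v | r v} ^ (Fintype.card ι - 1) := by
  have hpi : filter (fun f : ι → T => (∀ s, r (f s)) ∧ q (f t)) univ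
      = Fintype.piFinset (Function.update (fun _ => univ.filter r) t
          (univ.filter fun v => r v ∧ q v)) := by
    ext f
    simp only [mem_filter, mem_univ, true_and, Fintype.mem_piFinset]
    constructor
    · rintro ⟨hr, hq⟩ s
      rcases eq_or_ne s t with rfl | hs <;> simp_all
    · intro h
      have ht : r (f t) ∧ q (f t) := by simpa using h t
      refine ⟨fun s => ?_, ht.2⟩
      rcases eq_or_ne s t with rfl | hs
      · exact ht.1
      · simpa [hs] using h s
  rw [hpi, Fintype.card_piFinset, ← mul_prod_erase univ _ (mem_univ t), Function.update_self,
    prod_congr rfl fun s hs => by rw [Function.update_of_ne (ne_of_mem_erase hs)], prod_const,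
    card_erase_of_mem (mem_univ t), card_univ]

theorem sum_card_filter_apply (r q : T → Prop) [DecidablePred r] [DecidablePred q] :
    ∑ f ∈ univ.filter (fun f : ι → T => ∀ s, r (f s)), #{t | q (f t)}
      = Fintype.card ι * (#{v | r v ∧ q v} * #{v | r v} ^ (Fintype.card ι - 1)) := by
  have h := sum_card_bipartiteAbove_eq_sum_card_bipartiteBelow (fun (f : ι → T) t => q (f t))
    (s := univ.filter fun f : ι → T => ∀ s, r (f s)) (t := univ)
  simp only [bipartiteAbove, bipartiteBelow, filter_filter] at h
  rw [h, ← card_univ, ← smul_eq_mul, ← sum_const]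
  exact sum_congr rfl fun t _ => card_filter_forall_apply_and_apply r q t

end PiCounting

section BoolVectors

variable (l : ℕ)

theorem card_filter_existsUnique_eq_false :
    #{v : Fin l → Bool | ∃! i, v i = false} = l := by
  have h : univ.filter (fun v : Fin l → Bool => ∃! i, v i = false)
      = univ.image fun i => Function.update (fun _ => true) i false := by
    ext v
    simp only [mem_filter, mem_univ, true_and, mem_image]
    constructor
    · rintro ⟨i, hi, huniq⟩
      refine ⟨i, funext fun j => ?_⟩
      rcases eq_or_ne j i with rfl | hj
      · simp [hi]
      · have : v j ≠ false := fun h => hj (huniq j h)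
        simp_all
    · rintro ⟨i, rfl⟩
      exact ⟨i, by simp, fun j hj => by by_contra hji; simp [hji] at hj⟩
  rw [h, card_image_of_injective, card_univ, Fintype.card_fin]
  intro i j hij
  by_contra hne
  simpa [hne] using congrFun hij i

theorem card_filter_exists_eq_false :
    #{v : Fin l → Bool | ∃ i, v i = false} = 2 ^ l - 1 := by
  have h : univ.filter (fun v : Fin l → Bool => ∃ i, v i = false) = univ.erase fun _ => true := by
    ext v; simp [funext_iff]
  rw [h, card_erase_of_mem (mem_univ _), card_univ, Fintype.card_fun, Fintype.card_bool,
    Fintype.card_fin]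

end BoolVectors

theorem div_le_add_div_add_of_add_div_add_le_div {K : Type*} [Field K] [LinearOrder K] [IsStrictOrderedRing K]
    {a b m n : K} (hm : 0 < m) (hn : 0 < n)
    (h : (a + b) / (m + n) ≤ b / n) : a / m ≤ (a + b) / (m + n) := by
  rw [div_le_div_iff₀ (by positivity) hn] at h
  rw [div_le_div_iff₀ hm (by positivity)]
  nlinarith

section UniformMeasure

variable {ι : Type} [DecidableEq ι] [Fintype ι]

theorem unifProb_pos {p : Cube ι → Prop} (h : ∃ ω, p ω) : 0 < unifProb p := by
  obtain ⟨ω, hω⟩ := h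
  have hcard : 0 < #{ω | p ω} := card_pos.mpr ⟨ω, by simpa using hω⟩
  unfold unifProb
  exact div_pos (by exact_mod_cast hcard) (by exact_mod_cast Fintype.card_pos)

theorem condExpect_le_unifExp_of_unifExp_le_condExpect (X : Cube ι → ℝ) {A B : Cube ι → Prop}
    (hAB : ∀ ω, B ω ↔ ¬A ω) (hA : ∃ ω, A ω) (hB : ∃ ω, B ω)
    (h : unifExp X ≤ condExpect X B) : condExpect X A ≤ unifExp X := by
  have hBA : univ.filter B = univ.filter fun ω => ¬A ω := by ext; simp [hAB]
  obtain ⟨ω, hω⟩ := hA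
  obtain ⟨ω', hω'⟩ := hB
  have hm : (0 : ℝ) < #(univ.filter A) := by exact_mod_cast card_pos.mpr ⟨ω, by simpa using hω⟩
  have hn : (0 : ℝ) < #(univ.filter B) := by exact_mod_cast card_pos.mpr ⟨ω', by simpa using hω'⟩
  have hcard : (#(univ.filter A) : ℝ) + #(univ.filter B) = Fintype.card (Cube ι) := by
    rw [hBA, ← card_univ]; exact_mod_cast card_filter_add_card_filter_not A
  unfold unifExp condExpect at *
  rw [← hcard, ← sum_filter_add_sum_filter_not univ A X, ← hBA] at h ⊢
  exact div_le_add_div_add_of_add_div_add_le_div hm hn h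

end UniformMeasure

theorem natCast_mul_mul_pow_pred_div_pow {K : Type*} [Field K] (k : ℕ) (c x : K) :
    k * (c * x ^ (k - 1)) / x ^ k = k * c / x := by
  rcases k with _ | k
  · simp
  rcases eq_or_ne x 0 with rfl | hx
  · simp
  · field_simp
    rw [Nat.add_sub_cancel, pow_succ]
    ring

section Tribes

variable (k l : ℕ)

theorem tribes_eq_zero_iff (ω : Cube (Fin k × Fin l)) :
    tribes k l ω = 0 ↔ ∀ t, ∃ i, ω (t, i) = false := by
  unfold tribes; split_ifs <;> simp_all

theorem tribes_eq_zero_iff_ne_one (ω : Cube (Fin k × Fin l)) :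
    tribes k l ω = 0 ↔ ¬tribes k l ω = 1 := by
  unfold tribes; split_ifs <;> simp

theorem sum_pivTribeCount_filter_forall (r : (Fin l → Bool) → Prop) [DecidablePred r] :
    ∑ ω ∈ univ.filter (fun ω : Cube (Fin k × Fin l) => ∀ t, r fun i => ω (t, i)),
        pivTribeCount k l ω
      = k * (#{v | r v ∧ ∃! i, v i = false} * #{v | r v} ^ (k - 1)) := by
  have h := sum_card_filter_apply (ι := Fin k) r fun v => ∃! i, v i = false
  rw [Fintype.card_fin] at h
  rw [← h]
  exact sum_equiv (Equiv.curry _ _ _) (fun _ => by simp only [mem_filter, mem_univ, true_and]; rfl)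
    fun _ _ => rfl

theorem card_tribes_eq_zero :
    #{ω : Cube (Fin k × Fin l) | tribes k l ω = 0} = (2 ^ l - 1) ^ k := by
  have h := card_filter_forall_apply (ι := Fin k) fun v : Fin l → Bool => ∃ i, v i = false
  simp only [card_filter_exists_eq_false, Fintype.card_fin] at h
  rw [← h]
  exact card_equiv (Equiv.curry _ _ _) (by simp [Function.curry, tribes_eq_zero_iff])

theorem sum_pivTribeCount :
    ∑ ω : Cube (Fin k × Fin l), pivTribeCount k l ω = k * (l * (2 ^ l) ^ (k - 1)) := by
  simpa [card_filter_existsUnique_eq_false] using sum_pivTribeCount_filter_forall k l fun _ => True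

theorem sum_pivTribeCount_tribes_eq_zero :
    ∑ ω ∈ {ω : Cube (Fin k × Fin l) | tribes k l ω = 0}, pivTribeCount k l ω
      = k * (l * (2 ^ l - 1) ^ (k - 1)) := by
  have hpiv (v : Fin l → Bool) : ((∃ i, v i = false) ∧ ∃! i, v i = false) ↔ ∃! i, v i = false :=
    and_iff_right_of_imp ExistsUnique.exists
  have hfilter : univ.filter (fun ω : Cube (Fin k × Fin l) => tribes k l ω = 0)
      = univ.filter fun ω => ∀ t, ∃ i, ω (t, i) = false := by
    ext; simp [tribes_eq_zero_iff]
  rw [hfilter]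
  simpa [card_filter_existsUnique_eq_false, card_filter_exists_eq_false, hpiv]
    using sum_pivTribeCount_filter_forall k l fun v => ∃ i, v i = false

theorem unifExp_pivTribeCount :
    unifExp (fun ω : Cube (Fin k × Fin l) => (pivTribeCount k l ω : ℝ)) = k * l / 2 ^ l := by
  unfold unifExp
  rw [← Nat.cast_sum, sum_pivTribeCount, Fintype.card_fun, Fintype.card_prod, Fintype.card_fin,
    Fintype.card_fin, Fintype.card_bool, mul_comm k l, pow_mul]
  push_cast
  exact natCast_mul_mul_pow_pred_div_pow (K := ℝ) k _ _

theorem condExpect_pivTribeCount_tribes_eq_zero :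
    condExpect (fun ω : Cube (Fin k × Fin l) => (pivTribeCount k l ω : ℝ))
      (fun ω => tribes k l ω = 0) = k * l / (2 ^ l - 1) := by
  unfold condExpect
  -- `condExpect` filters with the classical instance, `card_tribes_eq_zero` with the inferred one.
  rw [filter_congr_decidable, ← Nat.cast_sum, sum_pivTribeCount_tribes_eq_zero,
    card_tribes_eq_zero]
  push_cast [Nat.one_le_two_pow]
  exact natCast_mul_mul_pow_pred_div_pow (K := ℝ) k _ _

end Tribes

/-- For `l ≥ 2` and `k ≥ 1`, the events `{Tribes = 1}` and `{Tribes = 0}`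
have positive probability and, with `X` the number of pivotal tribes,
`𝔼[X | Tribes = 1] ≤ 𝔼[X] ≤ 𝔼[X | Tribes = 0]` where `𝔼[X] = k·l·2^{-l}`. -/
theorem stmt8 (l k : ℕ) (hl : 2 ≤ l) (hk : 0 < k) :
    0 < unifProb (fun ω : Cube (Fin k × Fin l) => tribes k l ω = 1) ∧
    0 < unifProb (fun ω : Cube (Fin k × Fin l) => tribes k l ω = 0) ∧
    condExpect (fun ω : Cube (Fin k × Fin l) => (pivTribeCount k l ω : ℝ))
        (fun ω => tribes k l ω = 1) ≤
      unifExp (fun ω : Cube (Fin k × Fin l) => (pivTribeCount k l ω : ℝ)) ∧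
    unifExp (fun ω : Cube (Fin k × Fin l) => (pivTribeCount k l ω : ℝ)) ≤
      condExpect (fun ω : Cube (Fin k × Fin l) => (pivTribeCount k l ω : ℝ))
        (fun ω => tribes k l ω = 0) ∧
    unifExp (fun ω : Cube (Fin k × Fin l) => (pivTribeCount k l ω : ℝ)) =
      (k : ℝ) * (l : ℝ) * (1 / 2 : ℝ) ^ l := by
  have hone : ∃ ω : Cube (Fin k × Fin l), tribes k l ω = 1 :=
    ⟨fun _ => true, by rw [tribes, if_pos ⟨⟨0, hk⟩, fun _ => rfl⟩]⟩
  have hzero : ∃ ω : Cube (Fin k × Fin l), tribes k l ω = 0 :=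
    ⟨fun _ => false, (tribes_eq_zero_iff k l _).2 fun _ => ⟨⟨0, by omega⟩, rfl⟩⟩
  have hle : unifExp (fun ω : Cube (Fin k × Fin l) => (pivTribeCount k l ω : ℝ)) ≤
      condExpect (fun ω => (pivTribeCount k l ω : ℝ)) (fun ω => tribes k l ω = 0) := by
    rw [unifExp_pivTribeCount, condExpect_pivTribeCount_tribes_eq_zero]
    have h2 : (2 : ℝ) ≤ 2 ^ l := le_self_pow₀ one_le_two (by omega)
    gcongr <;> linarith
  refine ⟨unifProb_pos hone, unifProb_pos hzero, ?_, hle, ?_⟩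
  · exact condExpect_le_unifExp_of_unifExp_le_condExpect _ (tribes_eq_zero_iff_ne_one k l)
      hone hzero hle
  · rw [unifExp_pivTribeCount, one_div_pow, mul_one_div]
end
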